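/- For a set of binary trees T over the same leaf set and any leaf ordering σ, the Hamming OLA distance d_σ(T) (the number of indices at which at least two of the OLA vectors differ) can be strictly smaller than the reticulation number |MAAF(T)| - 1; i.e., there exist two trees T_1, T_2 on 6 leaves and an ordering σ with d_σ(T_1,T_2) < |MAAF(T_1,T_2)| - 1. -/

import Mathlib

open scoped Classical

namespace OLA

/-- Rooted binary phylogenetic trees with `ℕ`-labeled leaves. -/
inductive BTree where
  | leaf (x : ℕ)
  | node (l r : BTree)
deriving DecidableEq

namespace BTree

def leafList : BTree → List ℕ
  | .leaf x => [x]
  | .node l r => leafList l ++ leafList r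

def leafSet (t : BTree) : Finset ℕ := t.leafList.toFinset

/-- `t` is a phylogenetic tree on the leaf set `{0, …, n-1}`. -/
def IsPhylo (t : BTree) (n : ℕ) : Prop :=
  t.leafList.Nodup ∧ t.leafSet = Finset.range n

def minLeaf : BTree → ℕ
  | .leaf x => x
  | .node l r => min (minLeaf l) (minLeaf r)

/-- OLA index of the root of a (sub)tree: leaf label, or minus the second
smallest of the minimal leaves of the two children. -/
def idx : BTree → ℤ
  | .leaf x => (x : ℤ)
  | .node l r => -(max (minLeaf l) (minLeaf r) : ℤ)

/-- Restriction `T^i` of `t` to the leaves labeled `≤ i` (suppressing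
degree-2 nodes); `none` if no such leaf exists. -/
def restrictLe : BTree → ℕ → Option BTree
  | .leaf x, i => if x ≤ i then some (.leaf x) else none
  | .node l r, i =>
    match restrictLe l i, restrictLe r i with
    | some l', some r' => some (.node l' r')
    | some l', none => some l'
    | none, some r' => some r'
    | none, none => none

/-- Restriction `T|_S` of `t` to the leaves in `S` (suppressing degree-2 nodes). -/
def restrictTo : BTree → Finset ℕ → Option BTree
  | .leaf x, S => if x ∈ S then some (.leaf x) else none
  | .node l r, S =>
    match restrictTo l S, restrictTo r S with
    | some l', some r' => some (.node l' r')
    | some l', none => some l'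
    | none, some r' => some r'
    | none, none => none

/-- OLA index of the sibling of the leaf labeled `i`, if it exists. -/
def siblingIdx : BTree → ℕ → Option ℤ
  | .leaf _, _ => none
  | .node l r, i =>
    if l = .leaf i then some r.idx
    else if r = .leaf i then some l.idx
    else (siblingIdx l i).orElse (fun _ => siblingIdx r i)

/-- The OLA vector entry of `t` at position `i ≥ 1`: the index of the sibling
of leaf `i` in the restriction of `t` to leaves `0, …, i`. -/
def olaEntry (t : BTree) (i : ℕ) : ℤ :=
  ((t.restrictLe i).bind (fun t' => t'.siblingIdx i)).getD 0

def relabel (f : ℕ → ℕ) : BTree → BTree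
  | .leaf x => .leaf (f x)
  | .node l r => .node (relabel f l) (relabel f r)

/-- The set of clusters (leaf sets of rooted subtrees) of `t`.  Two leaf-labeled
trees over the same leaf set are isomorphic iff their cluster sets coincide. -/
def clusters : BTree → Set (Set ℕ)
  | .leaf x => {{x}}
  | .node l r => insert {y | y ∈ (node l r).leafList} (clusters l ∪ clusters r)

def subtreeAt : BTree → List Bool → Option BTree
  | t, [] => some t
  | .leaf _, _ :: _ => none
  | .node l _, false :: p => subtreeAt l p
  | .node _ r, true :: p => subtreeAt r p

/-- `w` occurs as a rooted subtree (i.e. the subtree below a node) of `t`. -/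
def IsNode (t w : BTree) : Prop := ∃ p, t.subtreeAt p = some w

/-- The position of the least common ancestor of the leaves in `S`. -/
def lcaPos : BTree → Finset ℕ → List Bool
  | .leaf _, _ => []
  | .node l r, S =>
    if S ⊆ l.leafSet then false :: lcaPos l S
    else if S ⊆ r.leafSet then true :: lcaPos r S
    else []

/-- Positions of the nodes of the minimal spanning subtree `T(S)`. -/
def spanNodes (t : BTree) (S : Finset ℕ) : Set (List Bool) :=
  {p | t.lcaPos S <+: p ∧ ∃ u, t.subtreeAt p = some u ∧ ∃ x ∈ S, x ∈ u.leafList}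

end BTree

/-- OLA vector of tree `t` under the leaf ordering `σ` (leaf `x` is the
`σ x`-th leaf in the order). -/
def ola (t : BTree) (σ : Equiv.Perm ℕ) (i : ℕ) : ℤ :=
  (t.relabel σ).olaEntry i

/-- `σ` is a valid leaf ordering of the leaf set `{0, …, n-1}`. -/
def IsOrdering (σ : Equiv.Perm ℕ) (n : ℕ) : Prop := ∀ x < n, σ x < n

/-- The set of (corrected) mismatched indices among `{1, …, i}` of a family of
OLA vectors: an index is mismatched if two of the vectors differ there, or if
all vectors place that leaf above the internal node created by an
already-mismatched leaf. -/
noncomputable def mismatch {ι : Type*} (v : ι → ℕ → ℤ) : ℕ → Finset ℕ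
  | 0 => ∅
  | i + 1 =>
    let M := mismatch v i
    if (∃ a b : ι, v a (i+1) ≠ v b (i+1)) ∨ (∃ j ∈ M, ∀ a : ι, v a (i+1) = -(j : ℤ))
    then insert (i+1) M else M

/-- Corrected OLA distance of a family of OLA vectors of trees on `n` leaves. -/
noncomputable def corrDist {ι : Type*} (v : ι → ℕ → ℤ) (n : ℕ) : ℕ :=
  (mismatch v (n-1)).card

/-- Hamming OLA distance: the number of indices where at least two vectors differ. -/
noncomputable def hamDist {ι : Type*} (v : ι → ℕ → ℤ) (n : ℕ) : ℕ :=
  ((Finset.Icc 1 (n-1)).filter fun i => ∃ a b : ι, v a i ≠ v b i).card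

/-- `comp` is an agreement forest for the trees `ts` over leaf set `{0,…,n-1}`:
components have pairwise disjoint leaf sets partitioning the full leaf set,
each tree restricted to a component's leaves is isomorphic to the component,
and the spanning subtrees are node-disjoint in each tree. -/
def IsAF {ι : Type*} (ts : ι → BTree) (n : ℕ) {f : ℕ} (comp : Fin f → BTree) : Prop :=
  (∀ i, (comp i).leafList.Nodup) ∧
  (∀ i j, i ≠ j → Disjoint (comp i).leafSet (comp j).leafSet) ∧
  (Finset.univ.biUnion (fun i => (comp i).leafSet) = Finset.range n) ∧
  (∀ a i, ∃ c, (ts a).restrictTo (comp i).leafSet = some c ∧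
      c.clusters = (comp i).clusters) ∧
  (∀ a i j, i ≠ j →
      Disjoint (BTree.spanNodes (ts a) ((comp i).leafSet))
               (BTree.spanNodes (ts a) ((comp j).leafSet)))

/-- Edge of the inheritance graph: some tree has a directed path from the root
of the spanning subtree of component `i` down to that of component `j`. -/
def inhEdge {ι : Type*} (ts : ι → BTree) {f : ℕ} (comp : Fin f → BTree)
    (i j : Fin f) : Prop :=
  i ≠ j ∧ ∃ a, (BTree.lcaPos (ts a) ((comp i).leafSet)) <+:
      (BTree.lcaPos (ts a) ((comp j).leafSet))

/-- `comp` is an acyclic agreement forest for `ts`. -/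
def IsAAF {ι : Type*} (ts : ι → BTree) (n : ℕ) {f : ℕ} (comp : Fin f → BTree) : Prop :=
  IsAF ts n comp ∧ ∀ i, ¬ Relation.TransGen (inhEdge ts comp) i i

/-- Size of a maximum acyclic agreement forest (an AAF with fewest components). -/
noncomputable def maafSize {ι : Type*} (ts : ι → BTree) (n : ℕ) : ℕ :=
  sInf {f | ∃ comp : Fin f → BTree, IsAAF ts n comp}

end OLA

/-!
Take `T₁ = (0,(1,(2,((3,4),5))))`, `T₂ = (0,(1,(((2,4),5),3)))` and the identity ordering.
Their OLA vectors `(0,1,2,3,-4)` and `(0,1,2,2,-4)` differ only at index 4, so the Hamming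
distance is 1. On the other hand no agreement forest of `T₁, T₂` has fewer than three
components: the trees differ, and for each of the 64 splits `S, Sᶜ` of the leaves either the
trees disagree on one side or the two spanning subtrees share a node in one of the trees
(a finite check). The forest of singletons is acyclic, so the infimum defining `maafSize` is
attained and is at least 3.
-/

namespace OLA

namespace BTree

@[simp] theorem mem_leafSet {t : BTree} {x : ℕ} : x ∈ t.leafSet ↔ x ∈ t.leafList :=
  List.mem_toFinset

@[simp] theorem leafSet_leaf (x : ℕ) : (leaf x).leafSet = {x} := by
  simp [leafSet, leafList]

-- A computable form of `clusters`, so that agreement of restrictions can be decided.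
def clusterFinset : BTree → Finset (Finset ℕ)
  | .leaf x => {{x}}
  | .node l r => insert (node l r).leafSet (clusterFinset l ∪ clusterFinset r)

theorem clusters_eq_image_clusterFinset (t : BTree) :
    t.clusters = (↑) '' (t.clusterFinset : Set (Finset ℕ)) := by
  induction t with
  | leaf x => simp [clusters, clusterFinset]
  | node l r ihl ihr =>
    rw [clusters, clusterFinset, Finset.coe_insert, Set.image_insert_eq, Finset.coe_union,
      Set.image_union, ihl, ihr]
    congr 1
    ext y
    simp [leafSet]

theorem clusterFinset_eq_of_clusters_eq {c₁ c₂ : BTree} (h : c₁.clusters = c₂.clusters) :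
    c₁.clusterFinset = c₂.clusterFinset := by
  rw [clusters_eq_image_clusterFinset, clusters_eq_image_clusterFinset] at h
  exact Finset.coe_injective (Finset.coe_injective.image_injective h)

def positions : BTree → List (List Bool)
  | .leaf _ => [[]]
  | .node l r => [] :: ((positions l).map (false :: ·) ++ (positions r).map (true :: ·))

theorem mem_positions_of_subtreeAt_eq_some {t u : BTree} {p : List Bool}
    (h : t.subtreeAt p = some u) : p ∈ t.positions := by
  induction t generalizing p with
  | leaf x =>
    cases p with
    | nil => simp [positions]
    | cons b q => simp [subtreeAt] at h
  | node l r ihl ihr =>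
    cases p with
    | nil => simp [positions]
    | cons b q =>
      cases b
      · simpa [positions] using ihl h
      · simpa [positions] using ihr h

instance (t : BTree) (S : Finset ℕ) (p : List Bool) : Decidable (p ∈ t.spanNodes S) :=
  decidable_of_iff (t.lcaPos S <+: p ∧ ∃ u ∈ t.subtreeAt p, ∃ x ∈ S, x ∈ u.leafList)
    (by simp [spanNodes])

theorem disjoint_spanNodes_iff {t : BTree} {S S' : Finset ℕ} :
    Disjoint (t.spanNodes S) (t.spanNodes S') ↔
      ∀ p ∈ t.positions, p ∈ t.spanNodes S → p ∉ t.spanNodes S' := by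
  refine ⟨fun h p _ hp => Set.disjoint_left.mp h hp, fun h => Set.disjoint_left.mpr ?_⟩
  intro p hp
  obtain ⟨-, u, hu, -⟩ := id hp
  exact h p (mem_positions_of_subtreeAt_eq_some hu) hp

theorem subtreeAt_append (t : BTree) (p q : List Bool) :
    t.subtreeAt (p ++ q) = (t.subtreeAt p).bind (·.subtreeAt q) := by
  induction t generalizing p with
  | leaf x => cases p <;> simp [subtreeAt]
  | node l r ihl ihr =>
    rcases p with _ | ⟨_ | _, p⟩ <;> simp [subtreeAt, ihl, ihr]

theorem subtreeAt_lcaPos_singleton {t : BTree} {x : ℕ} (hx : x ∈ t.leafList) :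
    t.subtreeAt (t.lcaPos {x}) = some (.leaf x) := by
  induction t with
  | leaf y => simp_all [leafList, lcaPos, subtreeAt]
  | node l r ihl ihr =>
    rcases List.mem_append.mp hx with hl | hr
    · simp [lcaPos, subtreeAt, hl, ihl]
    · by_cases hl : x ∈ l.leafList
      · simp [lcaPos, subtreeAt, hl, ihl]
      · simp [lcaPos, subtreeAt, hl, hr, ihr]

theorem eq_of_lcaPos_singleton_prefix {t : BTree} {x y : ℕ} (hx : x ∈ t.leafList)
    (hy : y ∈ t.leafList) (h : t.lcaPos {x} <+: t.lcaPos {y}) : x = y := by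
  obtain ⟨q, hq⟩ := h
  have := subtreeAt_lcaPos_singleton hy
  rw [← hq, subtreeAt_append, subtreeAt_lcaPos_singleton hx] at this
  cases q <;> simp_all [subtreeAt]

theorem restrictTo_eq_none {t : BTree} {S : Finset ℕ} (h : ∀ x ∈ t.leafList, x ∉ S) :
    t.restrictTo S = none := by
  induction t with
  | leaf x => simpa [restrictTo, leafList] using h
  | node l r ihl ihr =>
    simp only [leafList, List.mem_append] at h
    simp [restrictTo, ihl fun x hx => h x (.inl hx), ihr fun x hx => h x (.inr hx)]

theorem restrictTo_singleton {t : BTree} {x : ℕ} (hnd : t.leafList.Nodup)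
    (hx : x ∈ t.leafList) : t.restrictTo {x} = some (.leaf x) := by
  induction t with
  | leaf y => simp_all [leafList, restrictTo]
  | node l r ihl ihr =>
    obtain ⟨hndl, hndr, hlr⟩ := List.nodup_append.mp hnd
    rcases List.mem_append.mp hx with hl | hr
    · have : r.restrictTo {x} = none :=
        restrictTo_eq_none fun y hy hyx => hlr x hl y hy (Finset.mem_singleton.mp hyx).symm
      simp [restrictTo, ihl hndl hl, this]
    · have : l.restrictTo {x} = none :=
        restrictTo_eq_none fun y hy hyx => hlr y hy x hr (Finset.mem_singleton.mp hyx)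
      simp [restrictTo, ihr hndr hr, this]

end BTree

open BTree

def leafForest (n : ℕ) : Fin n → BTree := fun i => .leaf i

theorem isAAF_leafForest {ι : Type*} {ts : ι → BTree} {n : ℕ} (hts : ∀ a, (ts a).IsPhylo n) :
    IsAAF ts n (leafForest n) := by
  have hmem : ∀ a (i : Fin n), (i : ℕ) ∈ (ts a).leafList := fun a i => by
    simp [← mem_leafSet, (hts a).2]
  have hprefix : ∀ a (i j : Fin n), (ts a).lcaPos {(i : ℕ)} <+: (ts a).lcaPos {(j : ℕ)} → i = j :=
    fun a i j h => Fin.ext (eq_of_lcaPos_singleton_prefix (hmem a i) (hmem a j) h)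
  have hedge : ∀ i j, ¬ inhEdge ts (leafForest n) i j := by
    rintro i j ⟨hij, a, h⟩
    exact hij (hprefix a i j (by simpa [leafForest] using h))
  refine ⟨⟨fun i => by simp [leafForest, leafList], fun i j hij => ?_, ?_,
    fun a i => ⟨_, restrictTo_singleton (hts a).1 (hmem a i), rfl⟩, fun a i j hij => ?_⟩, ?_⟩
  · simpa [leafForest, Fin.val_ne_iff] using hij
  · ext x
    simpa [leafForest] using ⟨fun ⟨i, hi⟩ => hi ▸ i.isLt, fun hx => ⟨⟨x, hx⟩, rfl⟩⟩
  · refine Set.disjoint_left.mpr fun p ⟨hi, _⟩ ⟨hj, _⟩ => hij ?_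
    simp only [leafForest, leafSet_leaf] at hi hj
    rcases List.prefix_or_prefix_of_prefix hi hj with h | h
    exacts [hprefix a i j h, (hprefix a j i h).symm]
  · intro i h
    cases h with
    | single h => exact hedge _ _ h
    | tail _ h => exact hedge _ _ h

theorem le_maafSize {ι : Type*} {ts : ι → BTree} {n k f : ℕ} {comp : Fin f → BTree}
    (hcomp : IsAAF ts n comp) (h : ∀ g < k, ∀ comp : Fin g → BTree, ¬ IsAAF ts n comp) :
    k ≤ maafSize ts n := by
  by_contra! hlt
  obtain ⟨comp', hcomp'⟩ := Nat.sInf_mem (s := {f | ∃ comp : Fin f → BTree, IsAAF ts n comp})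
    ⟨f, comp, hcomp⟩
  exact h _ hlt comp' hcomp'

section AgreementForest

variable {ι : Type*} {ts : ι → BTree} {n f : ℕ}

def AgreeOn (ts : ι → BTree) (S : Finset ℕ) : Prop :=
  ∀ a b, ((ts a).restrictTo S).map clusterFinset = ((ts b).restrictTo S).map clusterFinset

instance [Fintype ι] (S : Finset ℕ) : Decidable (AgreeOn ts S) := by
  unfold AgreeOn; infer_instance

theorem IsAF.agreeOn {comp : Fin f → BTree} (h : IsAF ts n comp) (i : Fin f) :
    AgreeOn ts (comp i).leafSet := by
  obtain ⟨-, -, -, hiso, -⟩ := h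
  intro a b
  obtain ⟨c, hc, hcc⟩ := hiso a i
  obtain ⟨d, hd, hdc⟩ := hiso b i
  simp [hc, hd, clusterFinset_eq_of_clusters_eq (hcc.trans hdc.symm)]

theorem IsAF.leafSet_subset_range {comp : Fin f → BTree} (h : IsAF ts n comp) (i : Fin f) :
    (comp i).leafSet ⊆ Finset.range n := by
  obtain ⟨-, -, hunion, -⟩ := h
  exact hunion ▸ Finset.subset_biUnion_of_mem (fun j => (comp j).leafSet) (Finset.mem_univ i)

theorem IsAF.leafSet_eq_range {comp : Fin 1 → BTree} (h : IsAF ts n comp) :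
    (comp 0).leafSet = Finset.range n := by
  obtain ⟨-, -, hunion, -⟩ := h
  simpa using hunion

theorem IsAF.leafSet_one_eq_sdiff {comp : Fin 2 → BTree} (h : IsAF ts n comp) :
    (comp 1).leafSet = Finset.range n \ (comp 0).leafSet := by
  obtain ⟨-, hdisj, hunion, -⟩ := h
  have : (Finset.univ.biUnion fun i => (comp i).leafSet) = (comp 0).leafSet ∪ (comp 1).leafSet := by
    ext x
    simp [Fin.exists_fin_two]
  rw [← hunion, this, Finset.union_sdiff_cancel_left (hdisj 0 1 (by decide))]

/-- Necessary conditions for `S` and `{0, …, n-1} \ S` to be the leaf sets of a two-component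
agreement forest of `ts`. -/
def IsAgreementSplit (ts : ι → BTree) (n : ℕ) (S : Finset ℕ) : Prop :=
  AgreeOn ts S ∧ AgreeOn ts (Finset.range n \ S) ∧
    ∀ a, Disjoint ((ts a).spanNodes S) ((ts a).spanNodes (Finset.range n \ S))

instance [Fintype ι] (S : Finset ℕ) : Decidable (IsAgreementSplit ts n S) :=
  decidable_of_iff (AgreeOn ts S ∧ AgreeOn ts (Finset.range n \ S) ∧
    ∀ a, ∀ p ∈ (ts a).positions, p ∈ (ts a).spanNodes S →
      p ∉ (ts a).spanNodes (Finset.range n \ S))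
    (by simp only [IsAgreementSplit, disjoint_spanNodes_iff])

theorem IsAF.isAgreementSplit {comp : Fin 2 → BTree} (h : IsAF ts n comp) :
    IsAgreementSplit ts n (comp 0).leafSet := by
  unfold IsAgreementSplit
  rw [← h.leafSet_one_eq_sdiff]
  refine ⟨h.agreeOn 0, h.agreeOn 1, fun a => ?_⟩
  obtain ⟨-, -, -, -, hspan⟩ := h
  exact hspan a 0 1 (by decide)

end AgreementForest

namespace Counterexample

def T₁ : BTree :=
  .node (.leaf 0) (.node (.leaf 1) (.node (.leaf 2)
    (.node (.node (.leaf 3) (.leaf 4)) (.leaf 5))))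

def T₂ : BTree :=
  .node (.leaf 0) (.node (.leaf 1) (.node (.node (.node (.leaf 2) (.leaf 4)) (.leaf 5))
    (.leaf 3)))

theorem isPhylo_T₁ : T₁.IsPhylo 6 := ⟨by decide, by decide⟩

theorem isPhylo_T₂ : T₂.IsPhylo 6 := ⟨by decide, by decide⟩

theorem not_agreeOn_range : ¬ AgreeOn ![T₁, T₂] (Finset.range 6) := by decide

theorem not_isAgreementSplit :
    ∀ S ∈ (Finset.range 6).powerset, ¬ IsAgreementSplit ![T₁, T₂] 6 S := by
  decide

theorem three_le_maafSize : 3 ≤ maafSize ![T₁, T₂] 6 := by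
  have hphylo : ∀ a, (![T₁, T₂] a).IsPhylo 6 :=
    Fin.forall_fin_two.mpr ⟨isPhylo_T₁, isPhylo_T₂⟩
  refine le_maafSize (isAAF_leafForest hphylo) fun f hf comp hcomp => ?_
  interval_cases f
  · obtain ⟨⟨-, -, hunion, -⟩, -⟩ := hcomp
    rw [Finset.univ_eq_empty, Finset.biUnion_empty] at hunion
    exact absurd hunion (by decide)
  · exact not_agreeOn_range (hcomp.1.leafSet_eq_range ▸ hcomp.1.agreeOn 0)
  · exact not_isAgreementSplit _ (Finset.mem_powerset.mpr (hcomp.1.leafSet_subset_range 0))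
      hcomp.1.isAgreementSplit

theorem hamDist_ola_one : hamDist (fun a : Fin 2 => ola (![T₁, T₂] a) 1) 6 = 1 := by
  simp only [hamDist]
  decide

end Counterexample

end OLA

open OLA in
/-- the Hamming OLA distance can be strictly smaller than the
reticulation number `|MAAF| - 1`: there are two trees on 6 leaves and an
ordering witnessing this. -/
theorem stmt17 :
    ∃ T₁ T₂ : BTree, T₁.IsPhylo 6 ∧ T₂.IsPhylo 6 ∧
      ∃ σ : Equiv.Perm ℕ, IsOrdering σ 6 ∧
        hamDist (fun a : Fin 2 => ola (![T₁, T₂] a) σ) 6 <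
          maafSize (![T₁, T₂]) 6 - 1 := by
  refine ⟨Counterexample.T₁, Counterexample.T₂, Counterexample.isPhylo_T₁,
    Counterexample.isPhylo_T₂, 1, fun x hx => hx, ?_⟩
  have hmaaf := Counterexample.three_le_maafSize
  rw [Counterexample.hamDist_ola_one]
  omega
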